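/- Suppose g: S¹ → S¹ satisfies |g'| ≥ 15 and |g''| ≤ α, and f satisfies |∂_θ f| ≤ 8α, |∂_{θθ} f| ≤ 50α, |∂_{θx} f| ≤ α, |∂_x f| ≤ 4 + α, and |∂_{xx} f| ≤ 2α⁻¹, with 0 < α ≤ 1/10. If X: S¹ → ℝ is C² with |X'| ≤ α and |X''| ≤ α, and Y is defined (locally) by Y(g(θ)) = f(θ, X(θ)), then |Y'| ≤ α and |Y''| ≤ α. -/

import Mathlib

/-
Expansion of `g` divides by at least `15`. For `Y'` the numerator is at most
`8α + (4 + α)α ≤ 13α`. For `Y''` the only large coefficient, `|∂ₓₓ f| ≤ 2α⁻¹`, multiplies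
`X'²`, which is of order `α²`, so the numerator is still `O(α)` (at most `56α + 4α²`), and
the factor `1 / g'² ≤ 1 / 225` brings it below `α`.
-/

lemma abs_mul_le_of_abs_le {a b A B : ℝ} (ha : |a| ≤ A) (hb : |b| ≤ B) :
    |a * b| ≤ A * B := by
  rw [abs_mul]
  exact mul_le_mul ha hb (abs_nonneg b) ((abs_nonneg a).trans ha)

lemma abs_div_le_of_abs_le {a b A B : ℝ} (ha : |a| ≤ A) (hb : B ≤ |b|) (hB : 0 < B) :
    |a / b| ≤ A / B := by
  rw [abs_div]
  exact div_le_div₀ ((abs_nonneg a).trans ha) ha hB hb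

lemma abs_mul_sq_le_of_abs_le_inv {c x α K : ℝ} (hα : 0 < α) (hc : |c| ≤ K * α⁻¹)
    (hx : |x| ≤ α) : |c * x ^ 2| ≤ K * α := by
  have hx2 : |x ^ 2| ≤ α ^ 2 := by
    rw [abs_pow]
    exact pow_le_pow_left₀ (abs_nonneg x) hx 2
  calc |c * x ^ 2| ≤ K * α⁻¹ * α ^ 2 := abs_mul_le_of_abs_le hc hx2
    _ = K * α := by field_simp

/-- Pointwise form: `gd, gdd` are `g'(θ), g''(θ)`; `fθ, …, fxx` are the partial derivatives of `f`
at `(θ, X(θ))`. -/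
theorem admissible_curve_invariance
    (α gd gdd fθ fθθ fθx fx fxx X' X'' Y' Y'' : ℝ)
    (hα0 : 0 < α) (hα1 : α ≤ 1 / 10)
    (hgd : 15 ≤ |gd|) (hgdd : |gdd| ≤ α)
    (hfθ : |fθ| ≤ 8 * α) (hfθθ : |fθθ| ≤ 50 * α) (hfθx : |fθx| ≤ α)
    (hfx : |fx| ≤ 4 + α) (hfxx : |fxx| ≤ 2 * α⁻¹)
    (hX' : |X'| ≤ α) (hX'' : |X''| ≤ α)
    (hY' : Y' = (fθ + fx * X') / gd)
    (hY'' : Y'' = (1 / gd) ^ 2 *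
      (fθθ + 2 * fθx * X' + fxx * X' ^ 2 + fx * X'' - Y' * gdd)) :
    |Y'| ≤ α ∧ |Y''| ≤ α := by
  have hY'_le : |Y'| ≤ α := by
    have hnum : |fθ + fx * X'| ≤ 8 * α + (4 + α) * α :=
      (abs_add_le _ _).trans (add_le_add hfθ (abs_mul_le_of_abs_le hfx hX'))
    calc |Y'| ≤ (8 * α + (4 + α) * α) / 15 :=
          hY' ▸ abs_div_le_of_abs_le hnum hgd (by norm_num)
      _ ≤ α := by nlinarith
  refine ⟨hY'_le, ?_⟩
  have hnum :
      |fθθ + 2 * fθx * X' + fxx * X' ^ 2 + fx * X'' - Y' * gdd| ≤ 56 * α + 4 * α ^ 2 := by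
    have h₁ := abs_le.mp hfθθ
    have h₂ := abs_le.mp (abs_mul_le_of_abs_le (abs_mul_le_of_abs_le abs_two.le hfθx) hX')
    have h₃ := abs_le.mp (abs_mul_sq_le_of_abs_le_inv hα0 hfxx hX')
    have h₄ := abs_le.mp (abs_mul_le_of_abs_le hfx hX'')
    have h₅ := abs_le.mp (abs_mul_le_of_abs_le hY'_le hgdd)
    exact abs_le.mpr ⟨by linarith, by linarith⟩
  have hgd_sq : 15 ^ 2 ≤ |gd ^ 2| := by
    rw [abs_pow]
    exact pow_le_pow_left₀ (by norm_num) hgd 2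
  rw [hY'', one_div_pow, one_div_mul_eq_div]
  calc _ ≤ (56 * α + 4 * α ^ 2) / 15 ^ 2 := abs_div_le_of_abs_le hnum hgd_sq (by norm_num)
    _ ≤ α := by nlinarith
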